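/- The algebra (ω, f), where f(a, a) = a and f(a, b) = max(a, b) − 1 for a ≠ b, is not a Ramsey algebra: the sequence b⃗ = ⟨0, 1, 2, ...⟩ has no reduction homogeneous for the set X of even numbers. -/

import Mathlib

namespace RamseyAlg

/- Orderly-term syntax trees over an operation-index type `ι`:
`leaf` is the identity (a single variable), `node g f` applies the basic
operation `g` to the results of the trees in the forest `f`. -/
mutual
  inductive OTree (ι : Type) : Type
    | leaf : OTree ι
    | node : ι → OForest ι → OTree ι
  inductive OForest (ι : Type) : Type
    | nil : OForest ι
    | cons : OTree ι → OForest ι → OForest ι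
end

def OForest.length {ι : Type} : OForest ι → ℕ
  | .nil => 0
  | .cons _ f => f.length + 1

/- Well-formedness: each node applies a `k`-ary basic operation to exactly
`k` subtrees, where `ar` gives the arities. -/
mutual
  def OTree.WF {ι : Type} (ar : ι → ℕ) : OTree ι → Prop
    | .leaf => True
    | .node g f => OForest.length f = ar g ∧ OForest.WF ar f
  def OForest.WF {ι : Type} (ar : ι → ℕ) : OForest ι → Prop
    | .nil => True
    | .cons t f => OTree.WF ar t ∧ OForest.WF ar f
end

/- Evaluation of an orderly term on an input list: the variables of the term
consume an initial segment of the list, in order, each exactly once; what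
remains of the list is returned alongside the value. -/
mutual
  def OTree.evalAux {ι A : Type} (F : ι → List A → A) :
      OTree ι → List A → Option (A × List A)
    | .leaf, [] => none
    | .leaf, a :: rest => some (a, rest)
    | .node g f, l =>
      match OForest.evalAux F f l with
      | none => none
      | some (rs, rest) => some (F g rs, rest)
  def OForest.evalAux {ι A : Type} (F : ι → List A → A) :
      OForest ι → List A → Option (List A × List A)
    | .nil, l => some ([], l)
    | .cons t f, l =>
      match OTree.evalAux F t l with
      | none => none
      | some (r, rest) =>
        match OForest.evalAux F f rest with
        | none => none
        | some (rs, rest') => some (r :: rs, rest')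
end

/- The value of the orderly term `t` on the finite sequence `l`, defined
exactly when the variables of `t` consume all of `l`. -/
def OTree.eval {ι A : Type} (F : ι → List A → A) (t : OTree ι) (l : List A) :
    Option A :=
  match OTree.evalAux F t l with
  | some (a, []) => some a
  | _ => none

/- `Reduction ar F a b` : `a` is a reduction of `b` with respect to `F`, i.e.
there are well-formed orderly terms `t j` applied to consecutive disjoint
finite subsequences of `b` (extracted by the strictly monotone `e`, in blocks
of lengths `len j`) producing the terms of `a` in order. -/
def Reduction {ι A : Type} (ar : ι → ℕ) (F : ι → List A → A)
    (a b : ℕ → A) : Prop :=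
  ∃ (t : ℕ → OTree ι) (len : ℕ → ℕ) (e : ℕ → ℕ),
    StrictMono e ∧ (∀ j, (t j).WF ar) ∧
    ∀ j, (t j).eval F ((List.range (len j)).map
        (fun i => b (e ((∑ m ∈ Finset.range j, len m) + i)))) = some (a j)

/- `FR ar F b` : the set of values of orderly terms over `F` applied to
finite subsequences of `b`. -/
def FR {ι A : Type} (ar : ι → ℕ) (F : ι → List A → A) (b : ℕ → A) : Set A :=
  { x | ∃ (t : OTree ι) (l : List ℕ), t.WF ar ∧ l.Chain' (· < ·) ∧
      t.eval F (l.map b) = some x }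

/- `(A, F)` is a Ramsey algebra: every infinite sequence has, for every
`X ⊆ A`, a reduction homogeneous for `X`. -/
def RamseyAlgebra {ι A : Type} (ar : ι → ℕ) (F : ι → List A → A) : Prop :=
  ∀ (b : ℕ → A) (X : Set A), ∃ a : ℕ → A,
    Reduction ar F a b ∧ (FR ar F a ⊆ X ∨ FR ar F a ∩ X = ∅)

end RamseyAlg


open RamseyAlg in
/-- The binary operation of the direct-limit algebra: `f a a = a` and
`f a b = max a b - 1` for `a ≠ b`; as a list-operation over a one-symbol
binary signature. -/
def dlop : Unit → List ℕ → ℕ :=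
  fun _ l =>
    match l with
    | [a, b] => if a = b then a else max a b - 1
    | _ => 0

/-! On increasing arguments `m < n` the operation returns `n - 1 ∈ [m, n]`. Hence, by induction
on orderly terms, a term evaluated on an increasing list lies between two of its entries, and
so every reduction `a` of `⟨0, 1, 2, …⟩` is strictly increasing. Then `FR a` contains both
`a 1` and `f (a 0) (a 1) = a 1 - 1`, which have opposite parities. -/

namespace RamseyAlg

section Internal

variable {ι A : Type} [Preorder A]

def Between (c : List A) (v : A) : Prop :=
  ∃ x ∈ c, ∃ y ∈ c, x ≤ v ∧ v ≤ y

def IsInternal (ar : ι → ℕ) (F : ι → List A → A) : Prop :=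
  ∀ g rs, rs.length = ar g → rs.Pairwise (· < ·) → Between rs (F g rs)

theorem Between.append_right {c : List A} {v : A} (h : Between c v) (d : List A) :
    Between (c ++ d) v := by
  obtain ⟨x, hx, y, hy, hxv, hvy⟩ := h
  exact ⟨x, List.mem_append_left d hx, y, List.mem_append_left d hy, hxv, hvy⟩

theorem Between.append_left {c : List A} {v : A} (h : Between c v) (d : List A) :
    Between (d ++ c) v := by
  obtain ⟨x, hx, y, hy, hxv, hvy⟩ := h
  exact ⟨x, List.mem_append_right d hx, y, List.mem_append_right d hy, hxv, hvy⟩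

variable {ar : ι → ℕ} {F : ι → List A → A}

mutual
theorem OTree.evalAux_between (hF : IsInternal ar F) :
    ∀ (t : OTree ι) (l : List A) (v : A) (rest : List A),
      t.WF ar → l.Pairwise (· < ·) → t.evalAux F l = some (v, rest) →
      ∃ c, l = c ++ rest ∧ Between c v
  | .leaf, [], _, _, _, _, he => by simp [OTree.evalAux] at he
  | .leaf, x :: l, v, rest, _, _, he => by
    simp only [OTree.evalAux, Option.some.injEq, Prod.mk.injEq] at he
    obtain ⟨rfl, rfl⟩ := he
    exact ⟨[x], rfl, x, by simp, x, by simp, le_rfl, le_rfl⟩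
  | .node g f, l, v, rest, ⟨hlen, hwf⟩, hl, he => by
    rw [OTree.evalAux] at he
    split at he
    · simp at he
    · rename_i rs rest' hfe
      simp only [Option.some.injEq, Prod.mk.injEq] at he
      obtain ⟨rfl, rfl⟩ := he
      obtain ⟨c, rfl, hrlen, hrs, hbetween⟩ := OForest.evalAux_between hF f l rs rest' hwf hl hfe
      obtain ⟨x, hx, y, hy, hxv, hvy⟩ := hF g rs (hrlen.trans hlen) hrs
      obtain ⟨x', hx', -, -, hx'x, -⟩ := hbetween x hx
      obtain ⟨-, -, y', hy', -, hyy'⟩ := hbetween y hy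
      exact ⟨c, rfl, x', hx', y', hy', hx'x.trans hxv, hvy.trans hyy'⟩

theorem OForest.evalAux_between (hF : IsInternal ar F) :
    ∀ (f : OForest ι) (l rs rest : List A),
      f.WF ar → l.Pairwise (· < ·) → f.evalAux F l = some (rs, rest) →
      ∃ c, l = c ++ rest ∧ rs.length = f.length ∧ rs.Pairwise (· < ·) ∧ ∀ v ∈ rs, Between c v
  | .nil, l, rs, rest, _, _, he => by
    simp only [OForest.evalAux, Option.some.injEq, Prod.mk.injEq] at he
    obtain ⟨rfl, rfl⟩ := he
    exact ⟨[], rfl, rfl, List.Pairwise.nil, by simp⟩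
  | .cons t f, l, rs, rest, ⟨htwf, hfwf⟩, hl, he => by
    rw [OForest.evalAux] at he
    split at he
    · simp at he
    · rename_i v rest₁ hte
      split at he
      · simp at he
      · rename_i rs' rest' hfe
        simp only [Option.some.injEq, Prod.mk.injEq] at he
        obtain ⟨rfl, rfl⟩ := he
        obtain ⟨c₁, rfl, hv⟩ := OTree.evalAux_between hF t l v rest₁ htwf hl hte
        have hsplit := List.pairwise_append.mp hl
        obtain ⟨c₂, rfl, hlen, hrs', hbetween⟩ :=
          OForest.evalAux_between hF f rest₁ rs' rest' hfwf hsplit.2.1 hfe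
        -- `v` is bounded by an entry of `c₁`, which precedes every entry of `c₂`.
        have hv_lt : ∀ w ∈ rs', v < w := by
          intro w hw
          obtain ⟨-, -, y, hy, -, hvy⟩ := hv
          obtain ⟨x, hx, -, -, hxw, -⟩ := hbetween w hw
          exact hvy.trans_lt ((hsplit.2.2 y hy x (List.mem_append_left _ hx)).trans_le hxw)
        refine ⟨c₁ ++ c₂, by simp, by simp [hlen, OForest.length],
          List.pairwise_cons.mpr ⟨hv_lt, hrs'⟩, ?_⟩
        rintro w (_ | ⟨_, hw⟩)
        · exact hv.append_right c₂
        · exact (hbetween w hw).append_left c₁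
end

theorem OTree.eval_between (hF : IsInternal ar F) {t : OTree ι} {l : List A} {v : A}
    (ht : t.WF ar) (hl : l.Pairwise (· < ·)) (he : t.eval F l = some v) : Between l v := by
  rw [OTree.eval] at he
  split at he
  · rename_i w hw
    obtain ⟨c, rfl, hc⟩ := OTree.evalAux_between hF t l w [] ht hl hw
    cases he
    simpa using hc
  · simp at he

theorem Reduction.strictMono (hF : IsInternal ar F) {a b : ℕ → A} (hb : StrictMono b)
    (h : Reduction ar F a b) : StrictMono a := by
  obtain ⟨t, len, e, he, ht, heval⟩ := h
  set S : ℕ → ℕ := fun j => ∑ m ∈ Finset.range j, len m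
  have hblock : ∀ j, ∃ i < len j, ∃ i' < len j,
      b (e (S j + i)) ≤ a j ∧ a j ≤ b (e (S j + i')) := by
    intro j
    have hsorted : ((List.range (len j)).map fun i => b (e (S j + i))).Pairwise (· < ·) :=
      List.pairwise_map.mpr <| List.pairwise_lt_range.imp fun hii' => hb (he (by omega))
    obtain ⟨x, hx, y, hy, hxa, hay⟩ := OTree.eval_between hF (ht j) hsorted (heval j)
    simp only [List.mem_map, List.mem_range] at hx hy
    obtain ⟨i, hi, rfl⟩ := hx
    obtain ⟨i', hi', rfl⟩ := hy
    exact ⟨i, hi, i', hi', hxa, hay⟩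
  refine strictMono_nat_of_lt_succ fun j => ?_
  obtain ⟨-, -, i', hi', -, hle⟩ := hblock j
  obtain ⟨i, -, -, -, hge, -⟩ := hblock (j + 1)
  have hS : S (j + 1) = S j + len j := Finset.sum_range_succ len j
  exact hle.trans_lt ((hb (he (by omega))).trans_le hge)

end Internal

theorem apply_mem_FR {ι A : Type} (ar : ι → ℕ) (F : ι → List A → A) (a : ℕ → A) (n : ℕ) :
    a n ∈ FR ar F a :=
  ⟨.leaf, [n], trivial, List.isChain_singleton n, by simp [OTree.eval, OTree.evalAux]⟩

theorem binop_mem_FR {ι A : Type} {ar : ι → ℕ} (F : ι → List A → A) {g : ι} (hg : ar g = 2)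
    (a : ℕ → A) {m n : ℕ} (hmn : m < n) : F g [a m, a n] ∈ FR ar F a :=
  ⟨.node g (.cons .leaf (.cons .leaf .nil)), [m, n], ⟨hg.symm, trivial, trivial, trivial⟩,
    List.isChain_pair.mpr hmn, by simp [OTree.eval, OTree.evalAux, OForest.evalAux]⟩

end RamseyAlg

open RamseyAlg

theorem dlop_of_lt {m n : ℕ} (h : m < n) : dlop () [m, n] = n - 1 := by
  simp [dlop, h.ne, max_eq_right h.le]

theorem dlop_isInternal : IsInternal (fun _ : Unit => 2) dlop := by
  rintro g (_ | ⟨m, _ | ⟨n, _ | _⟩⟩) hlen hsorted <;> simp at hlen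
  have hmn : m < n := List.rel_of_pairwise_cons hsorted (by simp)
  rw [dlop_of_lt hmn]
  exact ⟨m, by simp, n, by simp, by omega, by omega⟩

theorem not_homogeneous_even_of_reduction_id {a : ℕ → ℕ}
    (h : Reduction (fun _ : Unit => 2) dlop a (fun n => n)) :
    ¬ (FR (fun _ : Unit => 2) dlop a ⊆ {n : ℕ | Even n} ∨
        FR (fun _ : Unit => 2) dlop a ∩ {n : ℕ | Even n} = ∅) := by
  have h01 : a 0 < a 1 := h.strictMono dlop_isInternal strictMono_id Nat.zero_lt_one
  have hmem₁ := apply_mem_FR (fun _ : Unit => 2) dlop a 1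
  have hmem₂ := binop_mem_FR (ar := fun _ : Unit => 2) dlop (g := ()) rfl a Nat.zero_lt_one
  rw [dlop_of_lt h01] at hmem₂
  have hparity : Even (a 1) ↔ ¬ Even (a 1 - 1) := by
    rw [Nat.even_sub (by omega)]
    simp
  rintro (hsub | hdisj)
  · exact hparity.mp (hsub hmem₁) (hsub hmem₂)
  · by_cases hev : Even (a 1)
    · exact hdisj.subset ⟨hmem₁, hev⟩
    · exact hdisj.subset ⟨hmem₂, not_not.mp (mt hparity.mpr hev)⟩

/-- The algebra `(ω, f)` with `f a a = a` and `f a b = max a b - 1`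
for `a ≠ b` is not a Ramsey algebra: the sequence `⟨0, 1, 2, ...⟩` has no reduction
homogeneous for the set of even numbers. -/
theorem stmt19 :
    ¬ RamseyAlgebra (fun _ : Unit => 2) dlop ∧
    ¬ ∃ a : ℕ → ℕ, Reduction (fun _ : Unit => 2) dlop a (fun n => n) ∧
        (FR (fun _ : Unit => 2) dlop a ⊆ {n : ℕ | Even n} ∨
          FR (fun _ : Unit => 2) dlop a ∩ {n : ℕ | Even n} = ∅) := by
  have hid : ¬ ∃ a : ℕ → ℕ, Reduction (fun _ : Unit => 2) dlop a (fun n => n) ∧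
      (FR (fun _ : Unit => 2) dlop a ⊆ {n : ℕ | Even n} ∨
        FR (fun _ : Unit => 2) dlop a ∩ {n : ℕ | Even n} = ∅) :=
    fun ⟨_, hred, hhom⟩ => not_homogeneous_even_of_reduction_id hred hhom
  exact ⟨fun hramsey => hid (hramsey (fun n => n) {n | Even n}), hid⟩
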